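/- Dynamic gradual guarantee, erased-to-annotated direction: if the erased configuration (H; t⋅T̄₀)^e reduces in one step to a non-error configuration (H'; T̄⋅T̄₀)^e, then the original annotated configuration H; t⋅T̄₀ reduces in one step to H'; T̄'⋅T̄₀ where T̄' is either equal to T̄, a permission error Err_P, or a cast error Err_C. Moreover, if the erased configuration steps to an error, the annotated one steps to the same error. -/

import Mathlib

namespace Dala

/-- The four Dala capabilities (`unsf` = unsafe, `lcl` = local). -/
inductive Cap
  | imm | iso | lcl | unsf
deriving DecidableEq

/-- Generating relations of the capability order: unsafe ≤ local ≤ iso ≤ imm. -/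
inductive CapGen : Cap → Cap → Prop
  | ul : CapGen .unsf .lcl
  | li : CapGen .lcl .iso
  | ii : CapGen .iso .imm

/-- The capability order. -/
def CapLe : Cap → Cap → Prop := Relation.ReflTransGen CapGen

/-- Names on the heap: program variables (inl) or locations (inr). -/
abbrev Name := ℕ ⊕ ℕ

instance : BEq Name := ⟨fun a b => decide (a = b)⟩

/-- Run-time values: locations, the absent marker ⊤, and the empty-channel marker ∅. -/
inductive Val
  | loc (ι : ℕ)
  | absent
  | empty
deriving DecidableEq

/-- Terms of the Dalarna calculus (A-normal form). Variable 0 is reserved for `self`. -/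
inductive Term
  | var (x : ℕ)
  | consume (x : ℕ)
  | val (v : Val)
  | letIn (x : ℕ) (e : Term) (t : Term)
  | fieldRead (x : ℕ) (f : ℕ)
  | fieldWrite (x : ℕ) (f : ℕ) (w : Term)
  | call (x : ℕ) (m : ℕ) (w : Term)
  | send (c : Term) (w : Term)
  | recv (c : Term)
  | spawn (x : ℕ) (t : Term)
  | blocked (k : ℕ) (ι : ℕ)
  | objLit (K : Cap) (fs : List (ℕ × Term)) (ms : List (ℕ × ℕ × Term))
  | cast (K : Cap) (w : Term)
  | copy (K : Cap) (x : ℕ)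

/-- Heap cells: objects (capability, owner thread, fields, methods), channels, stack variables. -/
inductive Cell
  | obj (K : Cap) (owner : ℕ) (fs : List (ℕ × Val)) (ms : List (ℕ × ℕ × Term))
  | chan (k : ℕ) (v : Val)
  | varc (v : Val)

/-- Heaps are association lists from names to cells (cons shadows). -/
abbrev Heap := List (Name × Cell)

/-- Environments (store typings): association lists from names to capabilities. -/
abbrev Env := List (Name × Cap)

-- Free variables of a term.
mutual
  def freeVars : Term → List ℕ
    | .var x => [x]
    | .consume x => [x]
    | .val _ => []
    | .letIn x e t => freeVars e ++ (freeVars t).filter (· ≠ x)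
    | .fieldRead x _ => [x]
    | .fieldWrite x _ w => x :: freeVars w
    | .call x _ w => x :: freeVars w
    | .send c w => freeVars c ++ freeVars w
    | .recv c => freeVars c
    | .spawn x t => (freeVars t).filter (· ≠ x)
    | .blocked _ _ => []
    | .objLit _ fs _ => freeVarsF fs
    | .cast _ w => freeVars w
    | .copy _ x => [x]
  def freeVarsF : List (ℕ × Term) → List ℕ
    | [] => []
    | p :: r => freeVars p.2 ++ freeVarsF r
end

-- All variables syntactically occurring in a term (including binders).
mutual
  def varsOf : Term → List ℕ
    | .var x => [x]
    | .consume x => [x]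
    | .val _ => []
    | .letIn x e t => x :: (varsOf e ++ varsOf t)
    | .fieldRead x _ => [x]
    | .fieldWrite x _ w => x :: varsOf w
    | .call x _ w => x :: varsOf w
    | .send c w => varsOf c ++ varsOf w
    | .recv c => varsOf c
    | .spawn x t => x :: varsOf t
    | .blocked _ _ => []
    | .objLit _ fs _ => varsOfF fs
    | .cast _ w => varsOf w
    | .copy _ x => [x]
  def varsOfF : List (ℕ × Term) → List ℕ
    | [] => []
    | p :: r => varsOf p.2 ++ varsOfF r
end

-- Locations syntactically occurring in a term.
mutual
  def locsOf : Term → List ℕ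
    | .var _ => []
    | .consume _ => []
    | .val v => match v with | .loc ι => [ι] | _ => []
    | .letIn _ e t => locsOf e ++ locsOf t
    | .fieldRead _ _ => []
    | .fieldWrite _ _ w => locsOf w
    | .call _ _ w => locsOf w
    | .send c w => locsOf c ++ locsOf w
    | .recv c => locsOf c
    | .spawn _ t => locsOf t
    | .blocked _ ι => [ι]
    | .objLit _ fs _ => locsOfF fs
    | .cast _ w => locsOf w
    | .copy _ _ => []
  def locsOfF : List (ℕ × Term) → List ℕ
    | [] => []
    | p :: r => locsOf p.2 ++ locsOfF r
end

-- Rename variable `a` to `b` throughout a term.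
mutual
  def subst (a b : ℕ) : Term → Term
    | .var x => .var (if x = a then b else x)
    | .consume x => .consume (if x = a then b else x)
    | .val v => .val v
    | .letIn x e t => .letIn x (subst a b e) (if x = a then t else subst a b t)
    | .fieldRead x f => .fieldRead (if x = a then b else x) f
    | .fieldWrite x f w => .fieldWrite (if x = a then b else x) f (subst a b w)
    | .call x m w => .call (if x = a then b else x) m (subst a b w)
    | .send c w => .send (subst a b c) (subst a b w)
    | .recv c => .recv (subst a b c)
    | .spawn x t => .spawn x (if x = a then t else subst a b t)
    | .blocked k ι => .blocked k ι
    | .objLit K fs ms => .objLit K (substF a b fs) ms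
    | .cast K w => .cast K (subst a b w)
    | .copy K x => .copy K (if x = a then b else x)
  def substF (a b : ℕ) : List (ℕ × Term) → List (ℕ × Term)
    | [] => []
    | p :: r => (p.1, subst a b p.2) :: substF a b r
end

/-! ### Heap lookups and capability helpers -/

def lookupH (H : Heap) (n : Name) : Option Cell := H.lookup n

def lookVar (H : Heap) (x : ℕ) : Option Val :=
  match lookupH H (Sum.inl x) with
  | some (.varc v) => some v
  | _ => none

/-- The capability of a value (channels count as local, per the store typing). -/
def capOf (H : Heap) (v : Val) : Option Cap :=
  match v with
  | .loc ι =>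
    match lookupH H (Sum.inr ι) with
    | some (.obj K _ _ _) => some K
    | some (.chan _ _) => some .lcl
    | _ => none
  | _ => none

def isIso (H : Heap) (v : Val) : Prop := capOf H v = some .iso
def isImm (H : Heap) (v : Val) : Prop := capOf H v = some .imm
def isLocal (H : Heap) (v : Val) : Prop := capOf H v = some .lcl

def ownerOf (H : Heap) (v : Val) : Option ℕ :=
  match v with
  | .loc ι =>
    match lookupH H (Sum.inr ι) with
    | some (.obj _ o _ _) => some o
    | _ => none
  | _ => none

def isOwner (H : Heap) (i : ℕ) (v : Val) : Prop := ownerOf H v = some i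

def localOwner (H : Heap) (i : ℕ) (v : Val) : Prop := isLocal H v → isOwner H i v

def notLocalOwner (H : Heap) (i : ℕ) (v : Val) : Prop := isLocal H v ∧ ¬ isOwner H i v

/-- `OkRef H K v`: the value `v` may be stored in a field of an object with capability `K`. -/
def OkRef (H : Heap) (K : Cap) (v : Val) : Prop :=
  ∀ ι, v = .loc ι → ∃ K', capOf H v = some K' ∧ CapLe K K'

/-- A deterministic fresh name (one more than the largest key in the heap). -/
def keyNat : Name → ℕ
  | .inl k => k
  | .inr k => k

def freshN (H : Heap) : ℕ := (H.map (fun p => keyNat p.1)).foldr max 0 + 1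

def isObjAt (H : Heap) (ι : ℕ) : Prop :=
  ∃ K o fs ms, lookupH H (Sum.inr ι) = some (.obj K o fs ms)

def isChanAt (H : Heap) (ι : ℕ) : Prop := ∃ k v, lookupH H (Sum.inr ι) = some (.chan k v)

/-! ### Evaluation contexts -/

inductive Ctx
  | hole
  | letc (x : ℕ) (C : Ctx) (t : Term)

def plug : Ctx → Term → Term
  | .hole, t => t
  | .letc x C u, t => .letIn x (plug C t) u

/-! ### Errors and single-thread reduction -/

inductive Err
  | normal   -- Err_N
  | absent   -- Err_A
  | perm     -- Err_P
  | cast     -- Err_C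
deriving DecidableEq

abbrev ThreadL := List (ℕ × Term)
abbrev Res := ThreadL ⊕ Err

/-- Single-thread small-step reduction: `StepT H i t H' r` reduces thread `i`
running `t` in heap `H`, producing heap `H'` and either new thread terms or an error. -/
inductive StepT : Heap → ℕ → Term → Heap → Res → Prop
  | rLet {H i x v t} :
      lookupH H (Sum.inl x) = none →
      StepT H i (.letIn x (.val v) t) ((Sum.inl x, .varc v) :: H) (.inl [(i, t)])
  | rVar {H i E x ι} :
      lookVar H x = some (.loc ι) → ¬ isIso H (.loc ι) →
      StepT H i (plug E (.var x)) H (.inl [(i, plug E (.val (.loc ι)))])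
  | rConsume {H i E x ι} :
      lookVar H x = some (.loc ι) →
      StepT H i (plug E (.consume x)) ((Sum.inl x, .varc .absent) :: H)
        (.inl [(i, plug E (.val (.loc ι)))])
  | rField {H i E x f ι K o fs ms v} :
      lookVar H x = some (.loc ι) →
      lookupH H (Sum.inr ι) = some (.obj K o fs ms) →
      fs.lookup f = some v → ¬ isIso H v → localOwner H i (.loc ι) →
      StepT H i (plug E (.fieldRead x f)) H (.inl [(i, plug E (.val v))])
  | rFieldAssign {H i E x f v ι K o fs ms v'} :
      lookVar H x = some (.loc ι) →
      lookupH H (Sum.inr ι) = some (.obj K o fs ms) →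
      fs.lookup f = some v' → ¬ isImm H (.loc ι) → OkRef H K v →
      (isLocal H (.loc ι) → isOwner H i (.loc ι) ∧ localOwner H i v) →
      StepT H i (plug E (.fieldWrite x f (.val v)))
        ((Sum.inr ι, .obj K o ((f, v) :: fs) ms) :: H) (.inl [(i, plug E (.val v'))])
  | rNew {H i E K} {fs : List (ℕ × Val)} {ms ι} :
      (∀ p ∈ fs, OkRef H K p.2 ∧ ((K = .lcl ∧ isLocal H p.2) → isOwner H i p.2)) →
      ι = freshN H →
      StepT H i (plug E (.objLit K (fs.map fun p => (p.1, Term.val p.2)) ms))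
        ((Sum.inr ι, .obj K i fs ms) :: H) (.inl [(i, plug E (.val (.loc ι)))])
  | rCall {H i E x m v ι K o fs ms y body x' y'} :
      lookVar H x = some (.loc ι) →
      lookupH H (Sum.inr ι) = some (.obj K o fs ms) →
      ms.lookup m = some (y, body) →
      x' = freshN H → y' = freshN H + 1 →
      StepT H i (plug E (.call x m (.val v)))
        ((Sum.inl x', .varc (.loc ι)) :: (Sum.inl y', .varc v) :: H)
        (.inl [(i, plug E (subst y y' (subst 0 x' body)))])
  | rCastLoc {H i E K ι o fs ms} :
      lookupH H (Sum.inr ι) = some (.obj K o fs ms) →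
      StepT H i (plug E (.cast K (.val (.loc ι)))) H (.inl [(i, plug E (.val (.loc ι)))])
  | rSpawn {H i E x t ι} :
      lookupH H (Sum.inl x) = none → ι = freshN H →
      StepT H i (plug E (.spawn x t))
        ((Sum.inl x, .varc (.loc ι)) :: (Sum.inr ι, .chan ι .empty) :: H)
        (.inl [(i, plug E (.val (.loc ι))), (ι + 1, t)])
  | rRecv {H i E ι k ι'} :
      lookupH H (Sum.inr ι) = some (.chan k (.loc ι')) →
      StepT H i (plug E (.recv (.val (.loc ι)))) ((Sum.inr ι, .chan k .empty) :: H)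
        (.inl [(i, plug E (.val (.loc ι')))])
  | rSendBlock {H i E ι v k k'} :
      lookupH H (Sum.inr ι) = some (.chan k .empty) → k' = freshN H →
      StepT H i (plug E (.send (.val (.loc ι)) (.val v)))
        ((Sum.inr ι, .chan k' v) :: H) (.inl [(i, plug E (.blocked k' ι))])
  | rSendUnblock {H i E k ι k' v} :
      lookupH H (Sum.inr ι) = some (.chan k' v) → (v = .empty ∨ k ≠ k') →
      StepT H i (plug E (.blocked k ι)) H (.inl [(i, plug E (.val (.loc ι)))])
  | rCopy {H i E K x ι' K0 o fs ms ι} :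
      K ≠ .iso → lookVar H x = some (.loc ι') → localOwner H i (.loc ι') →
      lookupH H (Sum.inr ι') = some (.obj K0 o fs ms) → ι = freshN H →
      StepT H i (plug E (.copy K x)) ((Sum.inr ι, .obj K i fs ms) :: H)
        (.inl [(i, plug E (.val (.loc ι)))])
  -- error rules
  | eNoSuchField {H i E x f ι K o fs ms} :
      lookVar H x = some (.loc ι) →
      lookupH H (Sum.inr ι) = some (.obj K o fs ms) → fs.lookup f = none →
      StepT H i (plug E (.fieldRead x f)) H (.inr .normal)
  | eNoSuchMethod {H i E x m v ι K o fs ms} :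
      lookVar H x = some (.loc ι) →
      lookupH H (Sum.inr ι) = some (.obj K o fs ms) → ms.lookup m = none →
      StepT H i (plug E (.call x m (.val v))) H (.inr .normal)
  | eNoSuchFieldAssign {H i E x f v ι K o fs ms} :
      lookVar H x = some (.loc ι) →
      lookupH H (Sum.inr ι) = some (.obj K o fs ms) → fs.lookup f = none →
      StepT H i (plug E (.fieldWrite x f (.val v))) H (.inr .normal)
  | eSendBadTargetOrArgument {H i E ι ι'} :
      (isObjAt H ι ∨ isChanAt H ι') →
      StepT H i (plug E (.send (.val (.loc ι)) (.val (.loc ι')))) H (.inr .normal)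
  | eRecvBadTarget {H i E ι} :
      isObjAt H ι →
      StepT H i (plug E (.recv (.val (.loc ι)))) H (.inr .normal)
  | eCastError {H i E K K' ι o fs ms} :
      lookupH H (Sum.inr ι) = some (.obj K' o fs ms) → K' ≠ K →
      StepT H i (plug E (.cast K (.val (.loc ι)))) H (.inr .cast)
  | eAbsentVar {H i E x} :
      lookVar H x = some .absent →
      StepT H i (plug E (.var x)) H (.inr .absent)
  | eConsume {H i E x} :
      lookVar H x = some .absent →
      StepT H i (plug E (.consume x)) H (.inr .absent)
  | eAbsentTarget {H i E x m v} :
      lookVar H x = some .absent →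
      StepT H i (plug E (.call x m (.val v))) H (.inr .absent)
  | eAbsentTargetAccess {H i E x f} :
      lookVar H x = some .absent →
      StepT H i (plug E (.fieldRead x f)) H (.inr .absent)
  | eAbsentFieldAssign {H i E x f v} :
      lookVar H x = some .absent →
      StepT H i (plug E (.fieldWrite x f (.val v))) H (.inr .absent)
  | eAbsentCopyTarget {H i E K x} :
      lookVar H x = some .absent →
      StepT H i (plug E (.copy K x)) H (.inr .absent)
  | eAliasIso {H i E x ι} :
      lookVar H x = some (.loc ι) → isIso H (.loc ι) →
      StepT H i (plug E (.var x)) H (.inr .perm)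
  | eIsoField {H i E x f ι K o fs ms v} :
      lookVar H x = some (.loc ι) →
      lookupH H (Sum.inr ι) = some (.obj K o fs ms) →
      fs.lookup f = some v → localOwner H i (.loc ι) → isIso H v →
      StepT H i (plug E (.fieldRead x f)) H (.inr .perm)
  | eLocalField {H i E x f ι} :
      lookVar H x = some (.loc ι) → notLocalOwner H i (.loc ι) →
      StepT H i (plug E (.fieldRead x f)) H (.inr .perm)
  | eBadInstantiation {H i E K} {fs : List (ℕ × Val)} {ms} :
      (∃ p ∈ fs, ¬ OkRef H K p.2 ∨ notLocalOwner H i p.2) →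
      StepT H i (plug E (.objLit K (fs.map fun p => (p.1, Term.val p.2)) ms)) H (.inr .perm)
  | eBadFieldAssign {H i E x f v ι K o fs ms v'} :
      lookVar H x = some (.loc ι) →
      lookupH H (Sum.inr ι) = some (.obj K o fs ms) → fs.lookup f = some v' →
      (isImm H (.loc ι) ∨ ¬ OkRef H K v ∨ notLocalOwner H i (.loc ι) ∨
        (isLocal H (.loc ι) ∧ isOwner H i (.loc ι) ∧ notLocalOwner H i v)) →
      StepT H i (plug E (.fieldWrite x f (.val v))) H (.inr .perm)
  | eCopyTarget {H i E K x ι} :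
      lookVar H x = some (.loc ι) → notLocalOwner H i (.loc ι) →
      StepT H i (plug E (.copy K x)) H (.inr .perm)

/-! ### Configurations and global reduction -/

inductive Conf
  | ok (ts : ThreadL)
  | err (e : Err)

/-- Global reduction: any thread may step (C-Eval together with the commutativity
equivalences); a finished thread (a value) may be removed. -/
inductive Step : Heap → Conf → Heap → Conf → Prop
  | ctx {H i t H' new pre post} :
      StepT H i t H' (.inl new) →
      Step H (.ok (pre ++ (i, t) :: post)) H' (.ok (pre ++ new ++ post))
  | toErr {H i t H' e pre post} :
      StepT H i t H' (.inr e) →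
      Step H (.ok (pre ++ (i, t) :: post)) H' (.err e)
  | done {H i v pre post} :
      Step H (.ok (pre ++ (i, .val v) :: post)) H (.ok (pre ++ post))

/-! ### Well-formedness -/

/-- Well-formed environment: no duplicate bindings. -/
def EnvOk (Γ : Env) : Prop := (Γ.map Prod.fst).Nodup

/-- `OkRefEnv Γ K v`: compatibility of a stored value with the enclosing capability,
relative to a store typing. -/
def OkRefEnv (Γ : Env) (K : Cap) (v : Val) : Prop :=
  ∀ ι, v = .loc ι → ∃ K', Γ.lookup (Sum.inr ι) = some K' ∧ CapLe K K'

/-- Well-formed store `Γ ⊢ H` (WF-H-Empty, WF-H-Absent, WF-H-Var, WF-H-Chan, WF-H-Object). -/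
inductive WFStore : Env → Heap → Prop
  | nil {Γ} : EnvOk Γ → WFStore Γ []
  | absent {Γ H x} :
      (Γ.lookup (Sum.inl x)).isSome → WFStore Γ H →
      WFStore Γ ((Sum.inl x, .varc .absent) :: H)
  | varb {Γ H x ι K} :
      lookupH H (Sum.inl x) = none → (lookupH H (Sum.inr ι)).isSome →
      Γ.lookup (Sum.inl x) = some K → Γ.lookup (Sum.inr ι) = some K →
      WFStore Γ H → WFStore Γ ((Sum.inl x, .varc (.loc ι)) :: H)
  | chanb {Γ H ι k v} :
      lookupH H (Sum.inr ι) = none → v ≠ .absent →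
      Γ.lookup (Sum.inr ι) = some .lcl →
      (∀ ι', v = .loc ι' → Γ.lookup (Sum.inr ι') ≠ some .lcl) →
      WFStore Γ H → WFStore Γ ((Sum.inr ι, .chan k v) :: H)
  | objb {Γ H ι K o fs ms} :
      Γ.lookup (Sum.inr ι) = some K → lookupH H (Sum.inr ι) = none →
      (∀ p ∈ fs, p.2 ≠ .empty ∧ OkRefEnv Γ K p.2) →
      WFStore Γ H → WFStore Γ ((Sum.inr ι, .obj K o fs ms) :: H)

/-- Well-formed terms `Γ ⊢ t`. -/
inductive WFTerm : Env → Term → Prop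
  | var {Γ x} : EnvOk Γ → (Γ.lookup (Sum.inl x)).isSome → WFTerm Γ (.var x)
  | loc {Γ ι} : EnvOk Γ → (Γ.lookup (Sum.inr ι)).isSome → WFTerm Γ (.val (.loc ι))
  | absent {Γ} : EnvOk Γ → WFTerm Γ (.val .absent)
  | consume {Γ x} : WFTerm Γ (.var x) → WFTerm Γ (.consume x)
  | letIn {Γ x K e t} :
      Γ.lookup (Sum.inl x) = none → WFTerm Γ e →
      WFTerm ((Sum.inl x, K) :: Γ) t → WFTerm Γ (.letIn x e t)
  | fieldRead {Γ x f} : WFTerm Γ (.var x) → WFTerm Γ (.fieldRead x f)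
  | fieldWrite {Γ x f w} : WFTerm Γ (.var x) → WFTerm Γ w → WFTerm Γ (.fieldWrite x f w)
  | call {Γ x m w} : WFTerm Γ (.var x) → WFTerm Γ w → WFTerm Γ (.call x m w)
  | send {Γ c w} : WFTerm Γ c → WFTerm Γ w → WFTerm Γ (.send c w)
  | recv {Γ c} : WFTerm Γ c → WFTerm Γ (.recv c)
  | blocked {Γ k ι} : EnvOk Γ → (Γ.lookup (Sum.inr ι)).isSome → WFTerm Γ (.blocked k ι)
  | spawn {Γ x t} :
      Γ.lookup (Sum.inl x) = none →
      WFTerm [(Sum.inl x, Cap.lcl)] t → (∀ y ∈ freeVars t, y = x) →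
      WFTerm Γ (.spawn x t)
  | copy {Γ K x} : K ≠ .iso → WFTerm Γ (.var x) → WFTerm Γ (.copy K x)
  | cast {Γ K w} : WFTerm Γ w → WFTerm Γ (.cast K w)
  | objLit {Γ K fs ms} (Km : ℕ × ℕ × Term → Cap) :
      (∀ p ∈ fs, WFTerm Γ p.2) →
      (∀ q ∈ ms, WFTerm ((Sum.inl q.2.1, Km q) :: [(Sum.inl 0, K)]) q.2.2) →
      WFTerm Γ (.objLit K fs ms)

/-! ### Reachability and the global invariants -/

/-- The field-edge relation on heap locations. -/
def pointsTo (H : Heap) (ι ι' : ℕ) : Prop :=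
  ∃ K o fs ms f, lookupH H (Sum.inr ι) = some (.obj K o fs ms) ∧ (f, Val.loc ι') ∈ fs

/-- Reachability between locations. -/
def Reach (H : Heap) : ℕ → ℕ → Prop := Relation.ReflTransGen (pointsTo H)

/-- Roots of a term: locations held by its free variables or occurring directly in it. -/
def rootsOf (H : Heap) (t : Term) (ι : ℕ) : Prop :=
  (∃ x ∈ freeVars t, lookVar H x = some (.loc ι)) ∨ ι ∈ locsOf t

/-- `TReach H t ι`: location `ι` belongs to the reachable object graph of term `t`. -/
def TReach (H : Heap) (t : Term) (ι : ℕ) : Prop :=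
  ∃ ι0, rootsOf H t ι0 ∧ Reach H ι0 ι

/-- Thread-locality invariant: no local object is reachable from two threads
(except via its unique owner). -/
def LocalInv (H : Heap) (ts : ThreadL) : Prop :=
  ∀ p ∈ ts, ∀ q ∈ ts, ∀ ι, TReach H p.2 ι → TReach H q.2 ι →
    p = q ∨ ¬ isLocal H (.loc ι) ∨
      (p ≠ q ∧ p.1 ≠ q.1 ∧
        (isLocal H (.loc ι) → isOwner H p.1 (.loc ι) ∧ ¬ isOwner H q.1 (.loc ι)))

/-- Heap incoming references to `ι`: fields and channels holding `loc ι`. -/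
def HRefs (H : Heap) (ι : ℕ) : Set Name :=
  {n | (∃ K o fs ms f, lookupH H n = some (.obj K o fs ms) ∧ (f, Val.loc ι) ∈ fs) ∨
       (∃ k, lookupH H n = some (.chan k (.loc ι)))}

/-- Stack incoming references to `ι` from a term: free variables bound to `ι`
(`some x`) or a direct occurrence of `ι` (`none`). -/
def SRefs (H : Heap) (t : Term) (ι : ℕ) : Set (Option ℕ) :=
  {r | (∃ x, r = some x ∧ x ∈ freeVars t ∧ lookVar H x = some (.loc ι)) ∨
       (r = none ∧ ι ∈ locsOf t)}

/-- All incoming references to `ι`: heap references (inl) and per-thread stack references (inr). -/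
def AllRefs (H : Heap) (ts : ThreadL) (ι : ℕ) : Set (Name ⊕ (ℕ × Option ℕ)) :=
  {r | (∃ n ∈ HRefs H ι, r = Sum.inl n) ∨
       (∃ k t s, (k, t) ∈ ts ∧ s ∈ SRefs H t ι ∧ r = Sum.inr (k, s))}

/-- Isolation invariant: if an iso object has more than one incoming reference,
all of them are stack references of a single thread (borrowing) and there are
no heap references. -/
def IsolatedInv (H : Heap) (ts : ThreadL) : Prop :=
  ∀ ι, isIso H (.loc ι) → ¬ (AllRefs H ts ι).Subsingleton →
    ∃ p ∈ ts, (∀ r ∈ AllRefs H ts ι, ∃ s, r = Sum.inr (p.1, s)) ∧ HRefs H ι = ∅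

/-- `domEq Γ H`: the environment and heap have the same domain. -/
def domEq (Γ : Env) (H : Heap) : Prop :=
  ∀ n, (Γ.lookup n).isSome ↔ (lookupH H n).isSome

/-- Well-formed configuration `Γ ⊢ H; T̄` (WF-Configuration). -/
def WFConfig (Γ : Env) (H : Heap) (ts : ThreadL) : Prop :=
  domEq Γ H ∧ WFStore Γ H ∧ (∀ p ∈ ts, WFTerm Γ p.2) ∧
    LocalInv H ts ∧ IsolatedInv H ts

/-! ### Terminal configurations -/

/-- Deadlocked configuration: every thread is blocked on a send, receive or blocked marker. -/
def Deadlock (H : Heap) (ts : ThreadL) : Prop :=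
  ts ≠ [] ∧ ∀ p ∈ ts,
    (∃ E ι k, p.2 = plug E (.recv (.val (.loc ι))) ∧
        lookupH H (Sum.inr ι) = some (.chan k .empty)) ∨
    (∃ E ι w k v, p.2 = plug E (.send (.val (.loc ι)) (.val w)) ∧
        lookupH H (Sum.inr ι) = some (.chan k v) ∧ v ≠ .empty) ∨
    (∃ E k ι v, p.2 = plug E (.blocked k ι) ∧
        lookupH H (Sum.inr ι) = some (.chan k v))

/-- Terminal configurations: no threads, an error, or a deadlock. -/
def Terminal (H : Heap) (c : Conf) : Prop :=
  match c with
  | .err _ => True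
  | .ok ts => ts = [] ∨ Deadlock H ts

/-! ### Safe-capability erasure -/

/-- Capability erasure: every capability becomes unsafe. -/
def eraseCap (_ : Cap) : Cap := .unsf

-- Erasure of terms.
mutual
  def eraseT : Term → Term
    | .var x => .var x
    | .consume x => .consume x
    | .val v => .val v
    | .letIn x e t => .letIn x (eraseT e) (eraseT t)
    | .fieldRead x f => .fieldRead x f
    | .fieldWrite x f w => .fieldWrite x f (eraseT w)
    | .call x m w => .call x m (eraseT w)
    | .send c w => .send (eraseT c) (eraseT w)
    | .recv c => .recv (eraseT c)
    | .spawn x t => .spawn x (eraseT t)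
    | .blocked k ι => .blocked k ι
    | .objLit _ fs ms => .objLit .unsf (eraseTF fs) (eraseTM ms)
    | .cast _ w => .cast .unsf (eraseT w)
    | .copy _ x => .copy .unsf x
  def eraseTF : List (ℕ × Term) → List (ℕ × Term)
    | [] => []
    | p :: r => (p.1, eraseT p.2) :: eraseTF r
  def eraseTM : List (ℕ × ℕ × Term) → List (ℕ × ℕ × Term)
    | [] => []
    | q :: r => (q.1, q.2.1, eraseT q.2.2) :: eraseTM r
end

def eraseCell : Cell → Cell
  | .obj _ o fs ms => .obj .unsf o fs (eraseTM ms)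
  | .chan k v => .chan k v
  | .varc v => .varc v

def eraseH (H : Heap) : Heap := H.map fun p => (p.1, eraseCell p.2)

def eraseEnv (Γ : Env) : Env := Γ.map fun p => (p.1, Cap.unsf)

def eraseTs (ts : ThreadL) : ThreadL := ts.map fun p => (p.1, eraseT p.2)

def eraseConf : Conf → Conf
  | .ok ts => .ok (eraseTs ts)
  | .err e => .err e

/-! ### Subterms -/

inductive Subterm : Term → Term → Prop
  | refl (t) : Subterm t t
  | letE {s e t x} : Subterm s e → Subterm s (.letIn x e t)
  | letT {s e t x} : Subterm s t → Subterm s (.letIn x e t)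
  | fieldWriteW {s x f w} : Subterm s w → Subterm s (.fieldWrite x f w)
  | callW {s x m w} : Subterm s w → Subterm s (.call x m w)
  | sendC {s c w} : Subterm s c → Subterm s (.send c w)
  | sendW {s c w} : Subterm s w → Subterm s (.send c w)
  | recvC {s c} : Subterm s c → Subterm s (.recv c)
  | spawnT {s x t} : Subterm s t → Subterm s (.spawn x t)
  | objF {s K fs ms f w} : (f, w) ∈ fs → Subterm s w → Subterm s (.objLit K fs ms)
  | objM {s K fs ms m y b} : (m, y, b) ∈ ms → Subterm s b → Subterm s (.objLit K fs ms)
  | castW {s K w} : Subterm s w → Subterm s (.cast K w)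

/-! ### Auxiliary lemmas for the gradual guarantee -/

theorem eraseH_cons (p : Name × Cell) (H : Heap) :
    eraseH (p :: H) = (p.1, eraseCell p.2) :: eraseH H := rfl

theorem capOf_loc (H : Heap) (ι : ℕ) :
    capOf H (.loc ι) = (match lookupH H (Sum.inr ι) with
      | some (.obj K _ _ _) => some K
      | some (.chan _ _) => some .lcl
      | _ => none) := rfl

theorem ownerOf_loc (H : Heap) (ι : ℕ) :
    ownerOf H (.loc ι) = (match lookupH H (Sum.inr ι) with
      | some (.obj _ o _ _) => some o
      | _ => none) := rfl

theorem lookupH_erase (H : Heap) (n : Name) :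
    lookupH (eraseH H) n = (lookupH H n).map eraseCell := by
  induction H with
  | nil => rfl
  | cons p r ih =>
    show List.lookup n ((p.1, eraseCell p.2) :: eraseH r) = _
    cases hb : n == p.1 with
    | true => simp [List.lookup, lookupH, hb]
    | false =>
      simp only [List.lookup, lookupH, hb]
      exact ih

theorem lookup_none_erase (H : Heap) (n : Name) :
    lookupH (eraseH H) n = none ↔ lookupH H n = none := by
  rw [lookupH_erase]; cases lookupH H n <;> simp

theorem lookVar_erase (H : Heap) (x : ℕ) : lookVar (eraseH H) x = lookVar H x := by
  unfold lookVar
  rw [lookupH_erase]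
  cases h : lookupH H (Sum.inl x) with
  | none => rfl
  | some c => cases c <;> rfl

theorem lookup_chan_erase {H : Heap} {n : Name} {k : ℕ} {v : Val} :
    lookupH (eraseH H) n = some (.chan k v) ↔ lookupH H n = some (.chan k v) := by
  rw [lookupH_erase]
  cases h : lookupH H n with
  | none => simp
  | some c => cases c <;> simp [eraseCell]

theorem lookup_obj_erase {H : Heap} {n : Name} {Ke : Cap} {o : ℕ}
    {fs : List (ℕ × Val)} {mse : List (ℕ × ℕ × Term)}
    (h : lookupH (eraseH H) n = some (.obj Ke o fs mse)) :
    ∃ K ms, lookupH H n = some (.obj K o fs ms) ∧ eraseTM ms = mse ∧ Ke = .unsf := by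
  rw [lookupH_erase] at h
  cases hl : lookupH H n with
  | none => rw [hl] at h; simp at h
  | some c =>
    rw [hl] at h
    cases c with
    | obj K o' fs' ms' =>
      simp only [Option.map_some, eraseCell, Option.some.injEq, Cell.obj.injEq] at h
      obtain ⟨h1, h2, h3, h4⟩ := h
      subst h2; subst h3
      exact ⟨K, ms', rfl, h4, h1.symm⟩
    | chan k v => simp [eraseCell] at h
    | varc v => simp [eraseCell] at h

theorem lookup_obj_erase' {H : Heap} {n : Name} {K : Cap} {o : ℕ}
    {fs : List (ℕ × Val)} {ms : List (ℕ × ℕ × Term)}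
    (h : lookupH H n = some (.obj K o fs ms)) :
    lookupH (eraseH H) n = some (.obj .unsf o fs (eraseTM ms)) := by
  rw [lookupH_erase, h]; rfl

theorem freshN_erase (H : Heap) : freshN (eraseH H) = freshN H := by
  unfold freshN eraseH
  rw [List.map_map]
  rfl

theorem ownerOf_erase (H : Heap) (v : Val) : ownerOf (eraseH H) v = ownerOf H v := by
  cases v with
  | loc ι =>
    rw [ownerOf_loc, ownerOf_loc, lookupH_erase]
    cases h : lookupH H (Sum.inr ι) with
    | none => rfl
    | some c => cases c <;> rfl
  | absent => rfl
  | empty => rfl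

theorem not_isIso_erase (H : Heap) (v : Val) : ¬ isIso (eraseH H) v := by
  unfold isIso
  cases v with
  | loc ι =>
    rw [capOf_loc, lookupH_erase]
    cases h : lookupH H (Sum.inr ι) with
    | none => simp
    | some c => cases c <;> simp [eraseCell]
  | absent => simp [capOf]
  | empty => simp [capOf]

theorem not_isImm_erase (H : Heap) (v : Val) : ¬ isImm (eraseH H) v := by
  unfold isImm
  cases v with
  | loc ι =>
    rw [capOf_loc, lookupH_erase]
    cases h : lookupH H (Sum.inr ι) with
    | none => simp
    | some c => cases c <;> simp [eraseCell]
  | absent => simp [capOf]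
  | empty => simp [capOf]

theorem isLocal_erase_iff (H : Heap) (ι : ℕ) :
    isLocal (eraseH H) (.loc ι) ↔ ∃ k w, lookupH H (Sum.inr ι) = some (.chan k w) := by
  unfold isLocal
  rw [capOf_loc, lookupH_erase]
  cases h : lookupH H (Sum.inr ι) with
  | none => simp
  | some c => cases c <;> simp [eraseCell]

theorem isLocal_of_chan {H : Heap} {ι k : ℕ} {w : Val}
    (h : lookupH H (Sum.inr ι) = some (.chan k w)) : isLocal H (.loc ι) := by
  unfold isLocal
  rw [capOf_loc, h]

theorem capOf_erase_none {H : Heap} {v : Val} :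
    capOf (eraseH H) v = none ↔ capOf H v = none := by
  cases v with
  | loc ι =>
    rw [capOf_loc, capOf_loc, lookupH_erase]
    cases h : lookupH H (Sum.inr ι) with
    | none => simp
    | some c => cases c <;> simp [eraseCell]
  | absent => simp [capOf]
  | empty => simp [capOf]

theorem notLocalOwner_erase {H : Heap} {i : ℕ} {v : Val}
    (h : notLocalOwner (eraseH H) i v) : notLocalOwner H i v := by
  obtain ⟨hl, ho⟩ := h
  have hv : ∃ ι, v = .loc ι := by
    cases v
    · exact ⟨_, rfl⟩
    all_goals (exfalso; revert hl; unfold isLocal; simp [capOf])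
  obtain ⟨ι, rfl⟩ := hv
  obtain ⟨k, w, hc⟩ := (isLocal_erase_iff H ι).1 hl
  refine ⟨isLocal_of_chan hc, ?_⟩
  intro ho'
  apply ho
  unfold isOwner at *
  rw [ownerOf_erase]
  exact ho'

theorem capLe_unsf (K : Cap) : CapLe .unsf K := by
  cases K
  · exact .trans (.trans (Relation.ReflTransGen.single .ul) (Relation.ReflTransGen.single .li))
      (Relation.ReflTransGen.single .ii)
  · exact .trans (Relation.ReflTransGen.single .ul) (Relation.ReflTransGen.single .li)
  · exact Relation.ReflTransGen.single .ul
  · exact .refl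

theorem not_okRef_erase {H : Heap} {v : Val} {K : Cap}
    (h : ¬ OkRef (eraseH H) .unsf v) : ¬ OkRef H K v := by
  intro hok
  apply h
  intro ι hv
  obtain ⟨K', hK', _⟩ := hok ι hv
  subst hv
  cases hc : capOf (eraseH H) (.loc ι) with
  | none =>
    rw [capOf_erase_none.1 hc] at hK'; exact absurd hK' (by simp)
  | some Kc => exact ⟨Kc, rfl, capLe_unsf Kc⟩

theorem isObjAt_erase {H : Heap} {ι : ℕ} : isObjAt (eraseH H) ι ↔ isObjAt H ι := by
  unfold isObjAt
  rw [lookupH_erase]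
  cases h : lookupH H (Sum.inr ι) with
  | none => simp
  | some c => cases c <;> simp [eraseCell]

theorem isChanAt_erase {H : Heap} {ι : ℕ} : isChanAt (eraseH H) ι ↔ isChanAt H ι := by
  unfold isChanAt
  rw [lookupH_erase]
  cases h : lookupH H (Sum.inr ι) with
  | none => simp
  | some c => cases c <;> simp [eraseCell]

theorem localOwner_or_not (H : Heap) (i : ℕ) (v : Val) :
    localOwner H i v ∨ notLocalOwner H i v := by
  by_cases hl : isLocal H v
  · by_cases ho : isOwner H i v
    · exact Or.inl fun _ => ho
    · exact Or.inr ⟨hl, ho⟩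
  · exact Or.inl fun h => absurd h hl
def eraseCtx : Ctx → Ctx
  | .hole => .hole
  | .letc x C u => .letc x (eraseCtx C) (eraseT u)

theorem erase_plug (E : Ctx) (s : Term) :
    eraseT (plug E s) = plug (eraseCtx E) (eraseT s) := by
  induction E with
  | hole => rfl
  | letc x C u ih => simp [plug, eraseCtx, eraseT, ih]

theorem plug_erase_inv : ∀ (E : Ctx) (t s : Term), eraseT t = plug E s →
    ∃ E' s', t = plug E' s' ∧ eraseCtx E' = E ∧ eraseT s' = s := by
  intro E
  induction E with
  | hole => exact fun t s h => ⟨.hole, t, rfl, rfl, h⟩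
  | letc x C u ih =>
    intro t s h
    cases t <;> simp [eraseT, plug] at h
    case letIn x' e t2 =>
      obtain ⟨hx, he, hu⟩ := h
      obtain ⟨E', s', rfl, rfl, rfl⟩ := ih e s he
      exact ⟨.letc x' E' t2, s', rfl, by simp [eraseCtx, hx, hu], rfl⟩

theorem eraseT_eq_val {u : Term} {v : Val} (h : eraseT u = .val v) : u = .val v := by
  cases u <;> simp [eraseT] at h <;> simp [h]

theorem eraseT_eq_var {u : Term} {x : ℕ} (h : eraseT u = .var x) : u = .var x := by
  cases u <;> simp [eraseT] at h <;> simp [h]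

theorem eraseT_eq_consume {u : Term} {x : ℕ} (h : eraseT u = .consume x) : u = .consume x := by
  cases u <;> simp [eraseT] at h <;> simp [h]

theorem eraseT_eq_fieldRead {u : Term} {x f : ℕ} (h : eraseT u = .fieldRead x f) :
    u = .fieldRead x f := by
  cases u <;> simp [eraseT] at h <;> simp [h]

theorem eraseT_eq_blocked {u : Term} {k ι : ℕ} (h : eraseT u = .blocked k ι) :
    u = .blocked k ι := by
  cases u <;> simp [eraseT] at h <;> simp [h]

theorem eraseT_eq_fieldWrite {u : Term} {x f : ℕ} {w : Term}
    (h : eraseT u = .fieldWrite x f w) :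
    ∃ w', u = .fieldWrite x f w' ∧ eraseT w' = w := by
  cases u <;> simp [eraseT] at h
  case fieldWrite x' f' w' =>
    exact ⟨w', by simp [h.1, h.2.1], h.2.2⟩

theorem eraseT_eq_call {u : Term} {x m : ℕ} {w : Term} (h : eraseT u = .call x m w) :
    ∃ w', u = .call x m w' ∧ eraseT w' = w := by
  cases u <;> simp [eraseT] at h
  case call x' m' w' =>
    exact ⟨w', by simp [h.1, h.2.1], h.2.2⟩

theorem eraseT_eq_send {u : Term} {c w : Term} (h : eraseT u = .send c w) :
    ∃ c' w', u = .send c' w' ∧ eraseT c' = c ∧ eraseT w' = w := by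
  cases u <;> simp [eraseT] at h
  case send c' w' => exact ⟨c', w', rfl, h.1, h.2⟩

theorem eraseT_eq_recv {u : Term} {c : Term} (h : eraseT u = .recv c) :
    ∃ c', u = .recv c' ∧ eraseT c' = c := by
  cases u <;> simp [eraseT] at h
  case recv c' => exact ⟨c', rfl, h⟩

theorem eraseT_eq_spawn {u : Term} {x : ℕ} {b : Term} (h : eraseT u = .spawn x b) :
    ∃ b', u = .spawn x b' ∧ eraseT b' = b := by
  cases u <;> simp [eraseT] at h
  case spawn x' b' => exact ⟨b', by simp [h.1], h.2⟩

theorem eraseT_eq_cast {u : Term} {w : Term} {Ke : Cap} (h : eraseT u = .cast Ke w) :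
    ∃ K w', u = .cast K w' ∧ eraseT w' = w ∧ Ke = .unsf := by
  cases u <;> simp [eraseT] at h
  case cast K w' => exact ⟨K, w', rfl, h.2, h.1.symm⟩

theorem eraseT_eq_copy {u : Term} {x : ℕ} {Ke : Cap} (h : eraseT u = .copy Ke x) :
    ∃ K, u = .copy K x ∧ Ke = .unsf := by
  cases u <;> simp [eraseT] at h
  case copy K x' => exact ⟨K, by simp [h.2], h.1.symm⟩

theorem eraseT_eq_objLit {u : Term} {Ke : Cap} {fse : List (ℕ × Term)}
    {mse : List (ℕ × ℕ × Term)} (h : eraseT u = .objLit Ke fse mse) :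
    ∃ K fs ms, u = .objLit K fs ms ∧ eraseTF fs = fse ∧ eraseTM ms = mse ∧ Ke = .unsf := by
  cases u <;> simp [eraseT] at h
  case objLit K fs ms => exact ⟨K, fs, ms, rfl, h.2.1, h.2.2, h.1.symm⟩

theorem eraseTF_vals : ∀ (fs0 : List (ℕ × Term)) (fs : List (ℕ × Val)),
    eraseTF fs0 = fs.map (fun p => (p.1, Term.val p.2)) →
    fs0 = fs.map (fun p => (p.1, Term.val p.2)) := by
  intro fs0
  induction fs0 with
  | nil => intro fs h; cases fs <;> simp_all [eraseTF]
  | cons p r ih =>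
    intro fs h
    cases fs with
    | nil => simp [eraseTF] at h
    | cons q fr =>
      have h0 : (p.1, eraseT p.2) :: eraseTF r =
          (q.1, Term.val q.2) :: fr.map (fun p => (p.1, Term.val p.2)) := h
      injection h0 with hh ht
      have hp1 : p.1 = q.1 := congrArg Prod.fst hh
      have hp2 : p.2 = Term.val q.2 := eraseT_eq_val (congrArg Prod.snd hh)
      simp [List.map_cons, ih fr ht, ← hp1, ← hp2]

theorem lookup_eraseTM (ms : List (ℕ × ℕ × Term)) (m : ℕ) :
    (eraseTM ms).lookup m = (ms.lookup m).map (fun q => (q.1, eraseT q.2)) := by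
  induction ms with
  | nil => rfl
  | cons q r ih =>
    show List.lookup m ((q.1, q.2.1, eraseT q.2.2) :: eraseTM r) = _
    cases hb : m == q.1 with
    | true => simp [List.lookup, hb]
    | false =>
      simp only [List.lookup, hb]
      exact ih

mutual
theorem erase_subst (a b : ℕ) (t : Term) :
    eraseT (subst a b t) = subst a b (eraseT t) := by
  cases t with
  | var x => simp [subst, eraseT]
  | consume x => simp [subst, eraseT]
  | val v => simp [subst, eraseT]
  | letIn x e u =>
    by_cases hx : x = a <;>
      simp [subst, eraseT, hx, erase_subst a b e, erase_subst a b u]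
  | fieldRead x f => simp [subst, eraseT]
  | fieldWrite x f w => simp [subst, eraseT, erase_subst a b w]
  | call x m w => simp [subst, eraseT, erase_subst a b w]
  | send c w => simp [subst, eraseT, erase_subst a b c, erase_subst a b w]
  | recv c => simp [subst, eraseT, erase_subst a b c]
  | spawn x u =>
    by_cases hx : x = a <;> simp [subst, eraseT, hx, erase_subst a b u]
  | blocked k ι => simp [subst, eraseT]
  | objLit K fs ms => simp [subst, eraseT, erase_substF a b fs]
  | cast K w => simp [subst, eraseT, erase_subst a b w]
  | copy K x => simp [subst, eraseT]

theorem erase_substF (a b : ℕ) (fs : List (ℕ × Term)) :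
    eraseTF (substF a b fs) = substF a b (eraseTF fs) := by
  cases fs with
  | nil => rfl
  | cons p r => simp [substF, eraseTF, erase_subst a b p.2, erase_substF a b r]
end

theorem wfTerm_plug {Γ : Env} : ∀ {E : Ctx} {s : Term}, WFTerm Γ (plug E s) → WFTerm Γ s := by
  intro E
  induction E with
  | hole => exact fun h => h
  | letc x C u ih =>
    intro s h
    cases h with
    | letIn _ he _ => exact ih he


/-- Dynamic gradual guarantee (erased-to-annotated direction): if the erased
configuration takes a non-error step then the annotated configuration takes
the same step (modulo erasure) or throws a permission/cast error; and if the
erased configuration steps to an error, the annotated one steps to the same error. -/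
theorem dynamic_gradual_guarantee_erased_to_annotated
    (Γ : Env) (H : Heap) (i : ℕ) (t : Term) (ts0 : ThreadL)
    (hwf : WFConfig Γ H ((i, t) :: ts0)) :
    (∀ (He : Heap) (newe : ThreadL),
      StepT (eraseH H) i (eraseT t) He (.inl newe) →
      ∃ H' r, StepT H i t H' r ∧
        ((∃ new, r = .inl new ∧ eraseH H' = He ∧ eraseTs new = newe) ∨
          r = .inr .perm ∨ r = .inr .cast)) ∧
    (∀ (He : Heap) (e : Err),
      StepT (eraseH H) i (eraseT t) He (.inr e) →
      ∃ H', StepT H i t H' (.inr e)) := by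
  obtain ⟨hdom, hstore, hterms, hlocal, hiso⟩ := hwf
  have hwt : WFTerm Γ t := hterms (i, t) (by simp)
  constructor
  · intro He newe hstep
    generalize hte : eraseT t = te at hstep
    cases hstep
    case rLet x v t2 hnone =>
      cases t <;> simp [eraseT] at hte
      case letIn x0 e t2' =>
        obtain ⟨rfl, he, ht2⟩ := hte
        obtain rfl := eraseT_eq_val he
        refine ⟨_, _, StepT.rLet ((lookup_none_erase H _).1 hnone),
          Or.inl ⟨_, rfl, rfl, ?_⟩⟩
        simp [eraseTs, ht2]
    case rVar E x ι hx hniso =>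
      obtain ⟨E', s', rfl, rfl, hs⟩ := plug_erase_inv _ _ _ hte
      obtain rfl := eraseT_eq_var hs
      rw [lookVar_erase] at hx
      by_cases hI : isIso H (.loc ι)
      · exact ⟨H, _, StepT.eAliasIso hx hI, Or.inr (Or.inl rfl)⟩
      · exact ⟨H, _, StepT.rVar hx hI,
          Or.inl ⟨_, rfl, rfl, by simp [eraseTs, erase_plug, eraseT]⟩⟩
    case rConsume E x ι hx =>
      obtain ⟨E', s', rfl, rfl, hs⟩ := plug_erase_inv _ _ _ hte
      obtain rfl := eraseT_eq_consume hs
      rw [lookVar_erase] at hx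
      exact ⟨_, _, StepT.rConsume hx,
        Or.inl ⟨_, rfl, rfl, by simp [eraseTs, erase_plug, eraseT]⟩⟩
    case rField E x f ι K o fs ms v hx hobj hf hniso hlo =>
      obtain ⟨E', s', rfl, rfl, hs⟩ := plug_erase_inv _ _ _ hte
      obtain rfl := eraseT_eq_fieldRead hs
      rw [lookVar_erase] at hx
      obtain ⟨K', ms', hobj', hms, hKu⟩ := lookup_obj_erase hobj
      rcases localOwner_or_not H i (.loc ι) with hl | hnl
      · by_cases hI : isIso H v
        · exact ⟨H, _, StepT.eIsoField hx hobj' hf hl hI, Or.inr (Or.inl rfl)⟩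
        · exact ⟨H, _, StepT.rField hx hobj' hf hI hl,
            Or.inl ⟨_, rfl, rfl, by simp [eraseTs, erase_plug, eraseT]⟩⟩
      · exact ⟨H, _, StepT.eLocalField hx hnl, Or.inr (Or.inl rfl)⟩
    case rFieldAssign E x f v ι K o fs ms v' hx hobj hf hnimm hokr hloc =>
      obtain ⟨E', s', rfl, rfl, hs⟩ := plug_erase_inv _ _ _ hte
      obtain ⟨w', rfl, hw⟩ := eraseT_eq_fieldWrite hs
      obtain rfl := eraseT_eq_val hw
      rw [lookVar_erase] at hx
      obtain ⟨K', ms', hobj', hms, hKu⟩ := lookup_obj_erase hobj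
      subst hKu
      by_cases hImm : isImm H (.loc ι)
      · exact ⟨H, _, StepT.eBadFieldAssign hx hobj' hf (Or.inl hImm),
          Or.inr (Or.inl rfl)⟩
      by_cases hok : OkRef H K' v
      case neg =>
        exact ⟨H, _, StepT.eBadFieldAssign hx hobj' hf (Or.inr (Or.inl hok)),
          Or.inr (Or.inl rfl)⟩
      by_cases hP : isLocal H (.loc ι) → isOwner H i (.loc ι) ∧ localOwner H i v
      · refine ⟨_, _, StepT.rFieldAssign hx hobj' hf hImm hok hP,
          Or.inl ⟨_, rfl, ?_, ?_⟩⟩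
        · simp [eraseH_cons, eraseCell, hms]
        · simp [eraseTs, erase_plug, eraseT]
      · push_neg at hP
        obtain ⟨hl, h2⟩ := hP
        by_cases how : isOwner H i (.loc ι)
        · rcases localOwner_or_not H i v with hv | hv
          · exact absurd hv (h2 how)
          · exact ⟨H, _, StepT.eBadFieldAssign hx hobj' hf
              (Or.inr (Or.inr (Or.inr ⟨hl, how, hv⟩))), Or.inr (Or.inl rfl)⟩
        · exact ⟨H, _, StepT.eBadFieldAssign hx hobj' hf
            (Or.inr (Or.inr (Or.inl ⟨hl, how⟩))), Or.inr (Or.inl rfl)⟩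
    case rNew E K fs ms ι hconds hι =>
      obtain ⟨E', s', rfl, rfl, hs⟩ := plug_erase_inv _ _ _ hte
      obtain ⟨K0, fs0, ms0, rfl, hfs, hms, hKu⟩ := eraseT_eq_objLit hs
      obtain rfl := eraseTF_vals fs0 fs hfs
      subst hKu
      rw [freshN_erase] at hι
      by_cases hc : ∀ p ∈ fs, OkRef H K0 p.2 ∧
          ((K0 = .lcl ∧ isLocal H p.2) → isOwner H i p.2)
      · refine ⟨_, _, StepT.rNew hc hι, Or.inl ⟨_, rfl, ?_, ?_⟩⟩
        · simp [eraseH_cons, eraseCell, hms]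
        · simp [eraseTs, erase_plug, eraseT]
      · push_neg at hc
        obtain ⟨p, hp, hpc⟩ := hc
        refine ⟨H, _, StepT.eBadInstantiation ⟨p, hp, ?_⟩, Or.inr (Or.inl rfl)⟩
        by_cases hok : OkRef H K0 p.2
        · obtain ⟨⟨_, hl⟩, hno⟩ := hpc hok
          exact Or.inr ⟨hl, hno⟩
        · exact Or.inl hok
    case rCall E x m v ι K o fs ms y body x' y' hx hobj hm hx' hy' =>
      obtain ⟨E', s', rfl, rfl, hs⟩ := plug_erase_inv _ _ _ hte
      obtain ⟨w', rfl, hw⟩ := eraseT_eq_call hs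
      obtain rfl := eraseT_eq_val hw
      rw [lookVar_erase] at hx
      obtain ⟨K', ms', hobj', hms, hKu⟩ := lookup_obj_erase hobj
      subst hms
      rw [freshN_erase] at hx' hy'
      rw [lookup_eraseTM] at hm
      cases hmm : ms'.lookup m with
      | none => rw [hmm] at hm; simp at hm
      | some q =>
        obtain ⟨y0, b0⟩ := q
        rw [hmm] at hm
        simp only [Option.map_some, Option.some.injEq, Prod.mk.injEq] at hm
        obtain ⟨rfl, hb⟩ := hm
        refine ⟨_, _, StepT.rCall hx hobj' hmm hx' hy',
          Or.inl ⟨_, rfl, rfl, ?_⟩⟩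
        simp [eraseTs, erase_plug, erase_subst, hb]
    case rCastLoc E K ι o fs ms hobj =>
      obtain ⟨E', s', rfl, rfl, hs⟩ := plug_erase_inv _ _ _ hte
      obtain ⟨K0, w', rfl, hw, hKu⟩ := eraseT_eq_cast hs
      obtain rfl := eraseT_eq_val hw
      obtain ⟨K', ms', hobj', hms, hKu2⟩ := lookup_obj_erase hobj
      by_cases hKK : K' = K0
      · subst hKK
        exact ⟨H, _, StepT.rCastLoc hobj',
          Or.inl ⟨_, rfl, rfl, by simp [eraseTs, erase_plug, eraseT]⟩⟩
      · exact ⟨H, _, StepT.eCastError hobj' hKK, Or.inr (Or.inr rfl)⟩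
    case rSpawn E x tb ι hnone hι =>
      obtain ⟨E', s', rfl, rfl, hs⟩ := plug_erase_inv _ _ _ hte
      obtain ⟨b', rfl, hb⟩ := eraseT_eq_spawn hs
      rw [freshN_erase] at hι
      refine ⟨_, _, StepT.rSpawn ((lookup_none_erase H _).1 hnone) hι,
        Or.inl ⟨_, rfl, rfl, ?_⟩⟩
      simp [eraseTs, erase_plug, eraseT, hb]
    case rRecv E ι k ι' hch =>
      obtain ⟨E', s', rfl, rfl, hs⟩ := plug_erase_inv _ _ _ hte
      obtain ⟨c', rfl, hc⟩ := eraseT_eq_recv hs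
      obtain rfl := eraseT_eq_val hc
      exact ⟨_, _, StepT.rRecv (lookup_chan_erase.1 hch),
        Or.inl ⟨_, rfl, rfl, by simp [eraseTs, erase_plug, eraseT]⟩⟩
    case rSendBlock E ι v k k' hch hk =>
      obtain ⟨E', s', rfl, rfl, hs⟩ := plug_erase_inv _ _ _ hte
      obtain ⟨c', w', rfl, hc, hw⟩ := eraseT_eq_send hs
      obtain rfl := eraseT_eq_val hc
      obtain rfl := eraseT_eq_val hw
      rw [freshN_erase] at hk
      exact ⟨_, _, StepT.rSendBlock (lookup_chan_erase.1 hch) hk,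
        Or.inl ⟨_, rfl, rfl, by simp [eraseTs, erase_plug, eraseT]⟩⟩
    case rSendUnblock E k ι k' v hch hcond =>
      obtain ⟨E', s', rfl, rfl, hs⟩ := plug_erase_inv _ _ _ hte
      obtain rfl := eraseT_eq_blocked hs
      exact ⟨_, _, StepT.rSendUnblock (lookup_chan_erase.1 hch) hcond,
        Or.inl ⟨_, rfl, rfl, by simp [eraseTs, erase_plug, eraseT]⟩⟩
    case rCopy E K x ι' K0 o fs ms ι hKne hx hlo hobj hι =>
      obtain ⟨E', s', rfl, rfl, hs⟩ := plug_erase_inv _ _ _ hte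
      obtain ⟨K1, rfl, hKu⟩ := eraseT_eq_copy hs
      subst hKu
      have hK1 : K1 ≠ .iso := by
        have hw := wfTerm_plug hwt
        cases hw with
        | copy hne _ => exact hne
      rw [lookVar_erase] at hx
      obtain ⟨K2, ms', hobj', hms, _⟩ := lookup_obj_erase hobj
      rw [freshN_erase] at hι
      rcases localOwner_or_not H i (.loc ι') with hl | hnl
      · refine ⟨_, _, StepT.rCopy hK1 hx hl hobj' hι, Or.inl ⟨_, rfl, ?_, ?_⟩⟩
        · simp [eraseH_cons, eraseCell, hms]
        · simp [eraseTs, erase_plug, eraseT]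
      · exact ⟨H, _, StepT.eCopyTarget hx hnl, Or.inr (Or.inl rfl)⟩
  · intro He e hstep
    generalize hte : eraseT t = te at hstep
    cases hstep
    case eNoSuchField E x f ι K o fs ms hx hobj hf =>
      obtain ⟨E', s', rfl, rfl, hs⟩ := plug_erase_inv _ _ _ hte
      obtain rfl := eraseT_eq_fieldRead hs
      rw [lookVar_erase] at hx
      obtain ⟨K', ms', hobj', _, _⟩ := lookup_obj_erase hobj
      exact ⟨H, StepT.eNoSuchField hx hobj' hf⟩
    case eNoSuchMethod E x m v ι K o fs ms hx hobj hm =>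
      obtain ⟨E', s', rfl, rfl, hs⟩ := plug_erase_inv _ _ _ hte
      obtain ⟨w', rfl, hw⟩ := eraseT_eq_call hs
      obtain rfl := eraseT_eq_val hw
      rw [lookVar_erase] at hx
      obtain ⟨K', ms', hobj', hms, _⟩ := lookup_obj_erase hobj
      subst hms
      rw [lookup_eraseTM, Option.map_eq_none_iff] at hm
      exact ⟨H, StepT.eNoSuchMethod hx hobj' hm⟩
    case eNoSuchFieldAssign E x f v ι K o fs ms hx hobj hf =>
      obtain ⟨E', s', rfl, rfl, hs⟩ := plug_erase_inv _ _ _ hte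
      obtain ⟨w', rfl, hw⟩ := eraseT_eq_fieldWrite hs
      obtain rfl := eraseT_eq_val hw
      rw [lookVar_erase] at hx
      obtain ⟨K', ms', hobj', _, _⟩ := lookup_obj_erase hobj
      exact ⟨H, StepT.eNoSuchFieldAssign hx hobj' hf⟩
    case eSendBadTargetOrArgument E ι ι' h =>
      obtain ⟨E', s', rfl, rfl, hs⟩ := plug_erase_inv _ _ _ hte
      obtain ⟨c', w', rfl, hc, hw⟩ := eraseT_eq_send hs
      obtain rfl := eraseT_eq_val hc
      obtain rfl := eraseT_eq_val hw
      exact ⟨H, StepT.eSendBadTargetOrArgument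
        (h.imp isObjAt_erase.1 isChanAt_erase.1)⟩
    case eRecvBadTarget E ι h =>
      obtain ⟨E', s', rfl, rfl, hs⟩ := plug_erase_inv _ _ _ hte
      obtain ⟨c', rfl, hc⟩ := eraseT_eq_recv hs
      obtain rfl := eraseT_eq_val hc
      exact ⟨H, StepT.eRecvBadTarget (isObjAt_erase.1 h)⟩
    case eCastError E K K' ι o fs ms hobj hne =>
      obtain ⟨E', s', rfl, rfl, hs⟩ := plug_erase_inv _ _ _ hte
      obtain ⟨K0, w', rfl, hw, hKu⟩ := eraseT_eq_cast hs
      obtain ⟨K1, ms', hobj', hms, hKu2⟩ := lookup_obj_erase hobj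
      exact absurd (hKu2.trans hKu.symm) hne
    case eAbsentVar E x hx =>
      obtain ⟨E', s', rfl, rfl, hs⟩ := plug_erase_inv _ _ _ hte
      obtain rfl := eraseT_eq_var hs
      rw [lookVar_erase] at hx
      exact ⟨H, StepT.eAbsentVar hx⟩
    case eConsume E x hx =>
      obtain ⟨E', s', rfl, rfl, hs⟩ := plug_erase_inv _ _ _ hte
      obtain rfl := eraseT_eq_consume hs
      rw [lookVar_erase] at hx
      exact ⟨H, StepT.eConsume hx⟩
    case eAbsentTarget E x m v hx =>
      obtain ⟨E', s', rfl, rfl, hs⟩ := plug_erase_inv _ _ _ hte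
      obtain ⟨w', rfl, hw⟩ := eraseT_eq_call hs
      obtain rfl := eraseT_eq_val hw
      rw [lookVar_erase] at hx
      exact ⟨H, StepT.eAbsentTarget hx⟩
    case eAbsentTargetAccess E x f hx =>
      obtain ⟨E', s', rfl, rfl, hs⟩ := plug_erase_inv _ _ _ hte
      obtain rfl := eraseT_eq_fieldRead hs
      rw [lookVar_erase] at hx
      exact ⟨H, StepT.eAbsentTargetAccess hx⟩
    case eAbsentFieldAssign E x f v hx =>
      obtain ⟨E', s', rfl, rfl, hs⟩ := plug_erase_inv _ _ _ hte
      obtain ⟨w', rfl, hw⟩ := eraseT_eq_fieldWrite hs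
      obtain rfl := eraseT_eq_val hw
      rw [lookVar_erase] at hx
      exact ⟨H, StepT.eAbsentFieldAssign hx⟩
    case eAbsentCopyTarget E K x hx =>
      obtain ⟨E', s', rfl, rfl, hs⟩ := plug_erase_inv _ _ _ hte
      obtain ⟨K1, rfl, _⟩ := eraseT_eq_copy hs
      rw [lookVar_erase] at hx
      exact ⟨H, StepT.eAbsentCopyTarget hx⟩
    case eAliasIso E x ι hx hI =>
      exact absurd hI (not_isIso_erase H _)
    case eIsoField E x f ι K o fs ms v hx hobj hf hlo hI =>
      exact absurd hI (not_isIso_erase H _)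
    case eLocalField E x f ι hx hnl =>
      obtain ⟨E', s', rfl, rfl, hs⟩ := plug_erase_inv _ _ _ hte
      obtain rfl := eraseT_eq_fieldRead hs
      rw [lookVar_erase] at hx
      exact ⟨H, StepT.eLocalField hx (notLocalOwner_erase hnl)⟩
    case eBadInstantiation E K fs ms h =>
      obtain ⟨E', s', rfl, rfl, hs⟩ := plug_erase_inv _ _ _ hte
      obtain ⟨K0, fs0, ms0, rfl, hfs, hms, hKu⟩ := eraseT_eq_objLit hs
      obtain rfl := eraseTF_vals fs0 fs hfs
      subst hKu
      obtain ⟨p, hp, hc⟩ := h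
      exact ⟨H, StepT.eBadInstantiation
        ⟨p, hp, hc.imp not_okRef_erase notLocalOwner_erase⟩⟩
    case eBadFieldAssign E x f v ι K o fs ms v' hx hobj hf hc =>
      obtain ⟨E', s', rfl, rfl, hs⟩ := plug_erase_inv _ _ _ hte
      obtain ⟨w', rfl, hw⟩ := eraseT_eq_fieldWrite hs
      obtain rfl := eraseT_eq_val hw
      rw [lookVar_erase] at hx
      obtain ⟨K', ms', hobj', hms, hKu⟩ := lookup_obj_erase hobj
      subst hKu
      rcases hc with hImm | hok | hnl | ⟨hl, _⟩
      · exact absurd hImm (not_isImm_erase H _)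
      · exact ⟨H, StepT.eBadFieldAssign hx hobj' hf
          (Or.inr (Or.inl (not_okRef_erase hok)))⟩
      · obtain ⟨k0, w0, hch⟩ := (isLocal_erase_iff H ι).1 hnl.1
        exact absurd (hobj'.symm.trans hch) (by simp)
      · obtain ⟨k0, w0, hch⟩ := (isLocal_erase_iff H ι).1 hl
        exact absurd (hobj'.symm.trans hch) (by simp)
    case eCopyTarget E K x ι hx hnl =>
      obtain ⟨E', s', rfl, rfl, hs⟩ := plug_erase_inv _ _ _ hte
      obtain ⟨K1, rfl, _⟩ := eraseT_eq_copy hs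
      rw [lookVar_erase] at hx
      exact ⟨H, StepT.eCopyTarget hx (notLocalOwner_erase hnl)⟩

end Dala
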